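/- Let g : ℝ^p → ℝ be continuous and let B ⊂ ℝ^p be a compact set with no isolated points such that every ball around a point of B intersects B in a set of positive Lebesgue measure. Let x₁, x₂, ... be i.i.d. uniform samples from B, and let ĝ_i be estimators with ĝ_i → g(x_i) in probability, uniformly over i, as an auxiliary sample size N → ∞. Then max over i = 1,...,M of ĝ_i converges in probability to sup over x ∈ B of g(x) as N, M → ∞. -/

import Mathlib

open MeasureTheory Filter
open scoped ENNReal NNReal

/-- Consistency of the estimated maximum quantile: for a continuous `g` on a compact
set `B` without isolated points, i.i.d. uniform design points `x i` in `B`, and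
estimators `ĝ N i` of `g (x i)` consistent uniformly over `i` as `N → ∞`, the empirical
maximum `max_{i ≤ M} ĝ N i` converges in probability to `sup_{x ∈ B} g x`
as `N, M → ∞`. -/
theorem estimated_max_quantile_consistent
    (n : ℕ) (g : EuclideanSpace ℝ (Fin n) → ℝ) (hg : Continuous g)
    (B : Set (EuclideanSpace ℝ (Fin n))) (hBc : IsCompact B) (hBne : B.Nonempty)
    (hiso : ∀ x ∈ B, ∀ δ > 0, 0 < volume (Metric.ball x δ ∩ B))
    {Ω : Type*} [MeasurableSpace Ω] (P : Measure Ω) [IsProbabilityMeasure P]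
    (x : ℕ → Ω → EuclideanSpace ℝ (Fin n)) (hmeas : ∀ i, Measurable (x i))
    (hiid : ProbabilityTheory.iIndepFun x P)
    (hlaw : ∀ i, Measure.map (x i) P = (volume B)⁻¹ • volume.restrict B)
    (ghat : ℕ → ℕ → Ω → ℝ)
    (hest : ∀ M : ℕ, ∀ δ > 0,
      Tendsto (fun N => P {ω | ∃ i : Fin (M + 1), δ < |ghat N i ω - g (x i ω)|})
        atTop (nhds 0)) :
    ∀ ε > 0, ∀ κ > 0, ∃ M₀ : ℕ, ∀ M ≥ M₀, ∃ N₀ : ℕ, ∀ N ≥ N₀,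
      P {ω | ε < |(⨆ i : Fin (M + 1), ghat N i ω) - sSup (g '' B)|} <
        ENNReal.ofReal κ := by
  intro ε hε κ hκ
  set S : ℝ := sSup (g '' B) with hS
  -- maximizer
  obtain ⟨x₀, hx₀B, hx₀max⟩ := hBc.exists_isMaxOn hBne hg.continuousOn
  have hbdd : BddAbove (g '' B) := (hBc.image hg).bddAbove
  have hSx₀ : S = g x₀ := by
    refine le_antisymm (csSup_le (hBne.image g) ?_) (le_csSup hbdd ⟨x₀, hx₀B, rfl⟩)
    rintro y ⟨z, hz, rfl⟩; exact hx₀max hz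
  have hle_S : ∀ z ∈ B, g z ≤ S := fun z hz => le_csSup hbdd ⟨z, hz, rfl⟩
  -- the open set where g is within ε/2 of the max
  set U : Set (EuclideanSpace ℝ (Fin n)) := {y | S - ε / 2 < g y} with hU
  have hUopen : IsOpen U := isOpen_lt continuous_const hg
  have hx₀U : x₀ ∈ U := by simp only [hU, Set.mem_setOf_eq, hSx₀]; linarith
  obtain ⟨δ, hδpos, hδball⟩ := Metric.isOpen_iff.1 hUopen x₀ hx₀U
  -- probability of hitting U
  have hBfin : volume B ≠ ⊤ := hBc.measure_lt_top.ne
  set c : ℝ≥0∞ := (volume B)⁻¹ * volume (Metric.ball x₀ δ ∩ B) with hc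
  have hcpos : 0 < c := by
    apply ENNReal.mul_pos
    · simp [ENNReal.inv_ne_zero, hBfin]
    · exact (hiso x₀ hx₀B δ hδpos).ne'
  have hPU : ∀ i, c ≤ P ((x i) ⁻¹' U) := by
    intro i
    have h1 : P ((x i) ⁻¹' U) = (Measure.map (x i) P) U :=
      (Measure.map_apply (hmeas i) hUopen.measurableSet).symm
    rw [h1, hlaw i, Measure.smul_apply, smul_eq_mul,
      Measure.restrict_apply hUopen.measurableSet]
    exact mul_le_mul_right (measure_mono (Set.inter_subset_inter_left _ hδball)) _
  have hPUc : ∀ i, P ((x i) ⁻¹' Uᶜ) ≤ 1 - c := by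
    intro i
    have : (x i) ⁻¹' Uᶜ = ((x i) ⁻¹' U)ᶜ := rfl
    rw [this, prob_compl_eq_one_sub ((hmeas i) hUopen.measurableSet)]
    exact tsub_le_tsub_left (hPU i) 1
  have hr1 : (1 : ℝ≥0∞) - c < 1 :=
    ENNReal.sub_lt_self ENNReal.one_ne_top one_ne_zero hcpos.ne'
  -- choose M₀
  have htends : Tendsto (fun m : ℕ => ((1 : ℝ≥0∞) - c) ^ m) atTop (nhds 0) :=
    ENNReal.tendsto_pow_atTop_nhds_zero_of_lt_one hr1
  have hhalf : (0 : ℝ≥0∞) < ENNReal.ofReal (κ / 2) := by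
    simp [ENNReal.ofReal_pos]; linarith
  obtain ⟨M₀, hM₀⟩ := (htends.eventually (gt_mem_nhds hhalf)).exists_forall_of_atTop
  refine ⟨M₀, fun M hM => ?_⟩
  -- the bad events
  set F : Set Ω := ⋂ i ∈ Finset.range (M + 1), (x i) ⁻¹' Uᶜ with hF
  have hPF : P F < ENNReal.ofReal (κ / 2) := by
    have hind : P F = ∏ i ∈ Finset.range (M + 1), P ((x i) ⁻¹' Uᶜ) :=
      hiid.meas_biInter (fun i _ => ⟨Uᶜ, hUopen.measurableSet.compl, rfl⟩)
    have hprod : ∏ i ∈ Finset.range (M + 1), P ((x i) ⁻¹' Uᶜ)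
        ≤ ((1 : ℝ≥0∞) - c) ^ (M + 1) := by
      calc ∏ i ∈ Finset.range (M + 1), P ((x i) ⁻¹' Uᶜ)
          ≤ ∏ _i ∈ Finset.range (M + 1), ((1 : ℝ≥0∞) - c) :=
            Finset.prod_le_prod' (fun i _ => hPUc i)
        _ = ((1 : ℝ≥0∞) - c) ^ (M + 1) := by simp
    calc P F = _ := hind
      _ ≤ ((1 : ℝ≥0∞) - c) ^ (M + 1) := hprod
      _ < ENNReal.ofReal (κ / 2) := hM₀ (M + 1) (by omega)
  -- the null event where some xᵢ is outside B
  set G : Set Ω := ⋃ i, (x i) ⁻¹' Bᶜ with hG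
  have hPG : P G = 0 := by
    refine measure_iUnion_null fun i => ?_
    have h1 : P ((x i) ⁻¹' Bᶜ) = (Measure.map (x i) P) Bᶜ :=
      (Measure.map_apply (hmeas i) hBc.isClosed.measurableSet.compl).symm
    rw [h1, hlaw i, Measure.smul_apply, smul_eq_mul,
      Measure.restrict_apply hBc.isClosed.measurableSet.compl]
    simp
  -- choose N₀ from hest
  have hεhalf : (0 : ℝ) < ε / 2 := by linarith
  obtain ⟨N₀, hN₀⟩ := (((hest M (ε / 2) hεhalf).eventually
    (gt_mem_nhds hhalf)).exists_forall_of_atTop)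
  refine ⟨N₀, fun N hN => ?_⟩
  set E1 : Set Ω := {ω | ∃ i : Fin (M + 1), ε / 2 < |ghat N i ω - g (x i ω)|} with hE1
  -- inclusion of the main event
  have hsub : {ω | ε < |(⨆ i : Fin (M + 1), ghat N i ω) - S|} ⊆ E1 ∪ F ∪ G := by
    intro ω hω
    by_contra hcon
    simp only [Set.mem_union, not_or] at hcon
    obtain ⟨⟨hnE1, hnF⟩, hnG⟩ := hcon
    simp only [hE1, Set.mem_setOf_eq, not_exists, not_lt] at hnE1
    -- some x_j ω ∈ U
    simp only [hF, Set.mem_iInter, Set.mem_preimage, Set.mem_compl_iff, not_forall] at hnF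
    obtain ⟨j, hjr, hjU⟩ := hnF
    rw [not_not] at hjU
    -- all x_i ω ∈ B
    simp only [hG, Set.mem_iUnion, Set.mem_preimage, Set.mem_compl_iff, not_exists,
      not_not] at hnG
    have hbdd' : BddAbove (Set.range fun i : Fin (M + 1) => ghat N i ω) :=
      Set.Finite.bddAbove (Set.finite_range _)
    have hup : (⨆ i : Fin (M + 1), ghat N i ω) ≤ S + ε / 2 := by
      refine ciSup_le fun i => ?_
      have h1 : |ghat N i ω - g (x i ω)| ≤ ε / 2 := hnE1 i
      have h2 : g (x (i : ℕ) ω) ≤ S := hle_S _ (hnG i)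
      have := abs_le.1 h1
      linarith [this.2]
    have hdown : S - ε < (⨆ i : Fin (M + 1), ghat N i ω) := by
      have hj : j < M + 1 := Finset.mem_range.1 hjr
      have h1 : ghat N j ω ≤ ⨆ i : Fin (M + 1), ghat N i ω :=
        le_ciSup hbdd' (⟨j, hj⟩ : Fin (M + 1))
      have h2 : |ghat N (⟨j, hj⟩ : Fin (M + 1)) ω - g (x j ω)| ≤ ε / 2 :=
        hnE1 ⟨j, hj⟩
      have h3 : S - ε / 2 < g (x j ω) := hjU
      have := abs_le.1 h2
      simp only [Set.mem_setOf_eq] at hω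
      linarith [this.1]
    simp only [Set.mem_setOf_eq] at hω
    rcases lt_abs.1 hω with h1 | h1 <;> linarith
  calc P {ω | ε < |(⨆ i : Fin (M + 1), ghat N i ω) - S|}
      ≤ P (E1 ∪ F ∪ G) := measure_mono hsub
    _ ≤ P (E1 ∪ F) + P G := measure_union_le _ _
    _ = P (E1 ∪ F) := by rw [hPG, add_zero]
    _ ≤ P E1 + P F := measure_union_le _ _
    _ < ENNReal.ofReal (κ / 2) + ENNReal.ofReal (κ / 2) :=
        ENNReal.add_lt_add (hN₀ N hN) hPF
    _ = ENNReal.ofReal κ := by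
        rw [← ENNReal.ofReal_add (by linarith) (by linarith)]; norm_num
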